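/- Fix ν ∈ ℂ, ψ ∈ ℝ and σ ∈ ℂ, and define f, g : ℝ → ℝ by f(A) = −2·Im[(e^{−iA}ψ + e^{iA}σ)/(1 + νν̄)] and g(A) = −2·Re[(e^{−iA}ψ + e^{iA}σ)/(1 + νν̄)]. Then for every A ∈ ℝ: g(A)·f′(A) − f(A)·g′(A) = 4(|σ|² − ψ²)/(1 + |ν|²)². In particular, this quantity is nonzero for all A if and only if ψ² ≠ |σ|². -/

import Mathlib

/-! Both f and g are constant multiples of trigonometric polynomials of degree one, and the
Wronskian of two such polynomials `p cos + q sin` and `r cos + s sin` is the constant `p s - q r`.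
For f and g this constant is `|σ|² - ψ²`, up to the factor `4 / (1 + |ν|²)²`. -/

/-- f(A) = −2·Im[(e^{−iA}ψ + e^{iA}σ)/(1 + νν̄)]. -/
noncomputable def alphaF (ν : ℂ) (ψ : ℝ) (σ : ℂ) (A : ℝ) : ℝ :=
  -2 * ((Complex.exp (-(A : ℂ) * Complex.I) * (ψ : ℂ) +
      Complex.exp ((A : ℂ) * Complex.I) * σ) / (1 + ν * (starRingEnd ℂ) ν)).im

/-- g(A) = −2·Re[(e^{−iA}ψ + e^{iA}σ)/(1 + νν̄)]. -/
noncomputable def alphaG (ν : ℂ) (ψ : ℝ) (σ : ℂ) (A : ℝ) : ℝ :=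
  -2 * ((Complex.exp (-(A : ℂ) * Complex.I) * (ψ : ℂ) +
      Complex.exp ((A : ℂ) * Complex.I) * σ) / (1 + ν * (starRingEnd ℂ) ν)).re

open Real

noncomputable def trigComb (p q A : ℝ) : ℝ := p * cos A + q * sin A

theorem hasDerivAt_trigComb (p q A : ℝ) :
    HasDerivAt (trigComb p q) (trigComb q (-p) A) A := by
  have h : HasDerivAt (fun A ↦ p * cos A + q * sin A) (p * -sin A + q * cos A) A :=
    ((hasDerivAt_cos A).const_mul p).add ((hasDerivAt_sin A).const_mul q)
  exact h.congr_deriv (by rw [trigComb]; ring)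

theorem deriv_const_mul_trigComb (k p q A : ℝ) :
    deriv (fun A ↦ k * trigComb p q A) A = k * trigComb q (-p) A :=
  ((hasDerivAt_trigComb p q A).const_mul k).deriv

theorem trigComb_wronskian (p q r s A : ℝ) :
    trigComb p q A * trigComb s (-r) A - trigComb r s A * trigComb q (-p) A = p * s - q * r := by
  simp only [trigComb]
  linear_combination (p * s - q * r) * sin_sq_add_cos_sq A

theorem one_add_mul_conj (ν : ℂ) :
    1 + ν * (starRingEnd ℂ) ν = ((1 + ‖ν‖ ^ 2 : ℝ) : ℂ) := by
  rw [Complex.mul_conj, Complex.normSq_eq_norm_sq]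
  push_cast
  rfl

theorem exp_neg_mul_I_mul_add_exp_mul_I_mul (ψ : ℝ) (σ : ℂ) (A : ℝ) :
    Complex.exp (-(A : ℂ) * Complex.I) * ψ + Complex.exp (A * Complex.I) * σ =
      ⟨trigComb (ψ + σ.re) (-σ.im) A, trigComb σ.im (σ.re - ψ) A⟩ := by
  apply Complex.ext <;>
    simp [trigComb, Complex.exp_re, Complex.exp_im, Complex.mul_re, Complex.mul_im] <;> ring

theorem alphaF_eq (ν : ℂ) (ψ : ℝ) (σ : ℂ) :
    alphaF ν ψ σ = fun A ↦ -2 / (1 + ‖ν‖ ^ 2) * trigComb σ.im (σ.re - ψ) A := by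
  funext A
  rw [alphaF, exp_neg_mul_I_mul_add_exp_mul_I_mul, one_add_mul_conj, Complex.div_ofReal_im]
  ring

theorem alphaG_eq (ν : ℂ) (ψ : ℝ) (σ : ℂ) :
    alphaG ν ψ σ = fun A ↦ -2 / (1 + ‖ν‖ ^ 2) * trigComb (ψ + σ.re) (-σ.im) A := by
  funext A
  rw [alphaG, exp_neg_mul_I_mul_add_exp_mul_I_mul, one_add_mul_conj, Complex.div_ofReal_re]
  ring

theorem alphaG_mul_deriv_alphaF_sub (ν : ℂ) (ψ : ℝ) (σ : ℂ) (A : ℝ) :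
    alphaG ν ψ σ A * deriv (alphaF ν ψ σ) A - alphaF ν ψ σ A * deriv (alphaG ν ψ σ) A =
      4 * (‖σ‖ ^ 2 - ψ ^ 2) / (1 + ‖ν‖ ^ 2) ^ 2 := by
  rw [alphaF_eq, alphaG_eq, deriv_const_mul_trigComb, deriv_const_mul_trigComb]
  set k := -2 / (1 + ‖ν‖ ^ 2)
  calc _ = k ^ 2 * (trigComb (ψ + σ.re) (-σ.im) A * trigComb (σ.re - ψ) (-σ.im) A
          - trigComb σ.im (σ.re - ψ) A * trigComb (-σ.im) (-(ψ + σ.re)) A) := by ring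
    _ = k ^ 2 * ((ψ + σ.re) * (σ.re - ψ) - -σ.im * σ.im) := by rw [trigComb_wronskian]
    _ = 4 * (‖σ‖ ^ 2 - ψ ^ 2) / (1 + ‖ν‖ ^ 2) ^ 2 := by
      rw [Complex.sq_norm, Complex.normSq_apply, div_pow]
      ring

/-- For all A, g(A)f′(A) − f(A)g′(A) = 4(|σ|² − ψ²)/(1 + |ν|²)²; in particular this
quantity is nonzero for all A iff ψ² ≠ |σ|². -/
theorem stmt3 (ν : ℂ) (ψ : ℝ) (σ : ℂ) :
    (∀ A : ℝ,
      alphaG ν ψ σ A * deriv (alphaF ν ψ σ) A - alphaF ν ψ σ A * deriv (alphaG ν ψ σ) A =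
        4 * (‖σ‖ ^ 2 - ψ ^ 2) / (1 + ‖ν‖ ^ 2) ^ 2) ∧
    ((∀ A : ℝ,
      alphaG ν ψ σ A * deriv (alphaF ν ψ σ) A - alphaF ν ψ σ A * deriv (alphaG ν ψ σ) A ≠ 0)
        ↔ ψ ^ 2 ≠ ‖σ‖ ^ 2) := by
  refine ⟨alphaG_mul_deriv_alphaF_sub ν ψ σ, ?_⟩
  have hc : (1 + ‖ν‖ ^ 2) ^ 2 ≠ 0 := by positivity
  simp only [alphaG_mul_deriv_alphaF_sub, forall_const, ne_eq, div_eq_zero_iff, hc, or_false,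
    mul_eq_zero, four_ne_zero, false_or, sub_eq_zero]
  exact not_congr eq_comm
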